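/- (Proposition 3) For every natural number k ≥ 0, the global Lyapunov exponent of the infinitely piecewise linear map φ_k equals 2; that is, ∫₀¹ ρ⁽ᵏ⁾(x) · log₂(D_k(x)) dx = 2, where D_k(x) denotes the slope of φ_k at x and ρ⁽ᵏ⁾ is the invariant density of φ_k. -/

import Mathlib

open MeasureTheory

/-- The slope `D_k` of the infinitely piecewise linear map `φ_k`:
`D_k(x) = 2^(1-k)` for `x ∈ [1/2, 1]` and `D_k(x) = 2^i` for `x ∈ [2^(-i), 2^(1-i))`, `i ≥ 2`.
For `0 < x < 1/2`, the index `i` is recovered as `i = -(Int.log 2 x)`. -/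
noncomputable def Dslope (k : ℕ) (x : ℝ) : ℝ :=
  if (1 : ℝ) / 2 ≤ x then (2 : ℝ) ^ ((1 : ℤ) - k)
  else (2 : ℝ) ^ (-(Int.log 2 x))

/-- The invariant density `ρᵏ` of `φ_k`: constant `1` when `k = 0`;
`4/3` on `[0,1/2)` and `2/3` on `[1/2,1]` when `k = 1`;
`(2^k + 2)/3` on `[0, 2^(-k))` and `2/3` on `[2^(-k), 1]` when `k ≥ 2`. -/
noncomputable def rho (k : ℕ) (x : ℝ) : ℝ :=
  if k = 0 then 1
  else if k = 1 then (if x < 1 / 2 then 4 / 3 else 2 / 3)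
  else (if x < (2 : ℝ) ^ (-(k : ℤ)) then ((2 : ℝ) ^ k + 2) / 3 else 2 / 3)


/-!
On the dyadic shell `[2^-(n+1), 2^-n)` both `ρ_k` and `log₂ D_k` are constant (`log₂ D_k = n + 1`,
except `1 - k` on `[1/2, 1)`), so the integral is the series of these constants weighted by the shell
lengths `2^-(n+1)`. Writing `ρ_k = 2/3 + (2^k/3)·1_{[0, 2^-k)}` on the shells, the series splits into
tails `∑_{n ≥ m} (n+1) 2^-(n+1) = (m+2) 2^-m` and the correction `-k/3` from the first shell:
`(2/3)·2 + (2^k/3)(k+2)2^-k - k/3 = 2`.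
-/

open Set

def dyadicShell (n : ℕ) : Set ℝ := Ico ((2 : ℝ)⁻¹ ^ (n + 1)) ((2 : ℝ)⁻¹ ^ n)

lemma two_inv_pow_eq_zpow (n : ℕ) : (2 : ℝ)⁻¹ ^ n = (2 : ℝ) ^ (-(n : ℤ)) := by
  rw [inv_pow, zpow_neg, zpow_natCast]

lemma mem_dyadicShell_iff {n : ℕ} {x : ℝ} :
    x ∈ dyadicShell n ↔ 0 < x ∧ Int.log 2 x = -((n : ℤ) + 1) := by
  have hpos : 0 < (2 : ℝ)⁻¹ ^ (n + 1) := by positivity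
  simp only [dyadicShell, mem_Ico, two_inv_pow_eq_zpow]
  constructor
  · rintro ⟨hlo, hhi⟩
    have hx : 0 < x := (two_inv_pow_eq_zpow _ ▸ hpos).trans_le hlo
    refine ⟨hx, le_antisymm ?_ ?_⟩
    · have := (Int.lt_zpow_iff_log_lt one_lt_two hx).mp hhi
      omega
    · have := (Int.zpow_le_iff_le_log one_lt_two hx).mp hlo
      push_cast at this
      omega
  · rintro ⟨hx, hlog⟩
    refine ⟨(Int.zpow_le_iff_le_log one_lt_two hx).mpr (by push_cast; omega),
      (Int.lt_zpow_iff_log_lt one_lt_two hx).mpr (by omega)⟩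

lemma lt_two_inv_pow_iff_of_mem_dyadicShell {n : ℕ} {x : ℝ} (hx : x ∈ dyadicShell n) (m : ℕ) :
    x < (2 : ℝ)⁻¹ ^ m ↔ m ≤ n := by
  obtain ⟨hx, hlog⟩ := mem_dyadicShell_iff.mp hx
  have := Int.lt_zpow_iff_log_lt (R := ℝ) (b := 2) (x := -(m : ℤ)) one_lt_two hx
  rw [Nat.cast_ofNat] at this
  rw [two_inv_pow_eq_zpow, this, hlog]
  omega

lemma pairwise_disjoint_dyadicShell : Pairwise (Function.onFun Disjoint dyadicShell) := by
  intro m n hmn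
  refine disjoint_left.mpr fun x hm hn => hmn ?_
  have := (mem_dyadicShell_iff.mp hm).2.symm.trans (mem_dyadicShell_iff.mp hn).2
  omega

lemma iUnion_dyadicShell : ⋃ n, dyadicShell n = Ioo (0 : ℝ) 1 := by
  ext x
  simp only [mem_iUnion, mem_dyadicShell_iff, mem_Ioo]
  constructor
  · rintro ⟨n, hx, hlog⟩
    refine ⟨hx, ?_⟩
    have := (Int.lt_zpow_iff_log_lt (x := 0) one_lt_two hx).mpr (by omega)
    simpa using this
  · rintro ⟨hx, hx1⟩
    have hlog : Int.log 2 x < 0 :=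
      (Int.lt_zpow_iff_log_lt one_lt_two hx).mp (by simpa using hx1)
    exact ⟨(-Int.log 2 x - 1).toNat, hx, by omega⟩

lemma volume_dyadicShell (n : ℕ) : volume (dyadicShell n) = ENNReal.ofReal ((2 : ℝ)⁻¹ ^ (n + 1)) := by
  rw [dyadicShell, Real.volume_Ico]
  congr 1
  ring

theorem integral_Ioo_eq_of_eqOn_dyadicShell {f : ℝ → ℝ} {c : ℕ → ℝ} {a : ℝ}
    (hf : ∀ n, EqOn f (fun _ => c n) (dyadicShell n))
    (hc : HasSum (fun n => c n * (2 : ℝ)⁻¹ ^ (n + 1)) a) :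
    ∫ x in Ioo 0 1, f x = a := by
  have hmeas (n : ℕ) : MeasurableSet (dyadicShell n) := measurableSet_Ico
  have hfin (n : ℕ) : volume (dyadicShell n) ≠ ⊤ := by
    rw [volume_dyadicShell]; exact ENNReal.ofReal_ne_top
  have integral_shell {g : ℝ → ℝ} {b : ℝ} (n : ℕ) (hg : EqOn g (fun _ => b) (dyadicShell n)) :
      ∫ x in dyadicShell n, g x = b * (2 : ℝ)⁻¹ ^ (n + 1) := by
    rw [setIntegral_congr_fun (hmeas n) hg, setIntegral_const, measureReal_def,
      volume_dyadicShell, ENNReal.toReal_ofReal (by positivity), smul_eq_mul, mul_comm]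
  have hint (n : ℕ) : IntegrableOn f (dyadicShell n) :=
    (integrableOn_const (hfin n)).congr_fun (hf n).symm (hmeas n)
  have hnorm : Summable fun n => ∫ x in dyadicShell n, ‖f x‖ := by
    refine hc.summable.abs.congr fun n => ?_
    rw [integral_shell (b := |c n|) n fun x hx => by simp [hf n hx], abs_mul,
      abs_of_pos (by positivity : (0 : ℝ) < 2⁻¹ ^ (n + 1))]
  rw [← iUnion_dyadicShell]
  refine (hasSum_integral_iUnion hmeas pairwise_disjoint_dyadicShell
    (integrableOn_iUnion_of_summable_integral_norm hint hnorm)).unique ?_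
  exact hc.congr_fun fun n => integral_shell n (hf n)

theorem hasSum_ite_le_succ_mul_geometric {r : ℝ} (hr : |r| < 1) (k : ℕ) :
    HasSum (fun n : ℕ => if k ≤ n then ((n : ℝ) + 1) * r ^ (n + 1) else 0)
      (r ^ (k + 1) * (r / (1 - r) ^ 2 + (k + 1) / (1 - r))) := by
  have hr' : ‖r‖ < 1 := by rwa [Real.norm_eq_abs]
  have hsum := ((hasSum_coe_mul_geometric_of_norm_lt_one hr').add
    ((hasSum_geometric_of_norm_lt_one hr').mul_left ((k : ℝ) + 1))).mul_left (r ^ (k + 1))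
  rw [← div_eq_mul_inv] at hsum
  rw [← hasSum_nat_add_iff' k, Finset.sum_eq_zero fun i hi => if_neg (by simpa using hi), sub_zero]
  refine hsum.congr_fun fun n => ?_
  rw [if_pos (Nat.le_add_left k n)]
  push_cast
  ring

theorem hasSum_ite_le_succ_mul_two_inv_pow (k : ℕ) :
    HasSum (fun n : ℕ => if k ≤ n then ((n : ℝ) + 1) * (2 : ℝ)⁻¹ ^ (n + 1) else 0)
      ((k + 2) * (2 : ℝ)⁻¹ ^ k) := by
  convert hasSum_ite_le_succ_mul_geometric (by norm_num : |(2 : ℝ)⁻¹| < 1) k using 1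
  rw [pow_succ]
  ring

theorem hasSum_lyapunov_series (k : ℕ) :
    HasSum (fun n : ℕ => (2 / 3 + if k ≤ n then (2 : ℝ) ^ k / 3 else 0) *
      ((n : ℝ) + 1 - if n = 0 then (k : ℝ) else 0) * (2 : ℝ)⁻¹ ^ (n + 1)) 2 := by
  have hsum := (((hasSum_ite_le_succ_mul_two_inv_pow 0).mul_left (2 / 3)).add
    ((hasSum_ite_le_succ_mul_two_inv_pow k).mul_left (2 ^ k / 3))).add
    (hasSum_ite_eq 0 (-(k : ℝ) / 3))
  have hval : 2 / 3 * ((((0 : ℕ) : ℝ) + 2) * (2 : ℝ)⁻¹ ^ 0) + 2 ^ k / 3 * ((k + 2) * 2⁻¹ ^ k)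
      + -(k : ℝ) / 3 = 2 := by
    have h : (2 : ℝ) ^ k * 2⁻¹ ^ k = 1 := by rw [← mul_pow]; norm_num
    linear_combination (((k : ℝ) + 2) / 3) * h
  rw [hval] at hsum
  refine hsum.congr_fun fun n => ?_
  rcases Nat.eq_zero_or_pos n with rfl | hn
  · rcases Nat.eq_zero_or_pos k with rfl | hk
    · norm_num
    · simp only [Nat.not_le.mpr hk, ↓reduceIte, add_zero, CharP.cast_eq_zero, zero_add, pow_one,
        le_refl, one_mul, mul_zero]
      ring
  · simp only [hn.ne', ↓reduceIte, sub_zero, zero_le, mul_ite, mul_zero, add_zero]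
    split_ifs <;> ring

lemma rho_eq_of_mem_dyadicShell {k n : ℕ} {x : ℝ} (hx : x ∈ dyadicShell n) :
    rho k x = 2 / 3 + if k ≤ n then 2 ^ k / 3 else 0 := by
  have hhalf : x < 1 / 2 ↔ 1 ≤ n := by
    simpa using lt_two_inv_pow_iff_of_mem_dyadicShell hx 1
  have hk : x < 2 ^ (-(k : ℤ)) ↔ k ≤ n := by
    simpa [two_inv_pow_eq_zpow] using lt_two_inv_pow_iff_of_mem_dyadicShell hx k
  simp only [rho, hhalf, hk]
  split_ifs <;> first | omega | ring1 | (subst_vars; norm_num)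

lemma logb_Dslope_of_mem_dyadicShell {k n : ℕ} {x : ℝ} (hx : x ∈ dyadicShell n) :
    Real.logb 2 (Dslope k x) = n + 1 - if n = 0 then (k : ℝ) else 0 := by
  have hhalf : 1 / 2 ≤ x ↔ n = 0 := by
    simpa using (lt_two_inv_pow_iff_of_mem_dyadicShell hx 1).not
  simp only [Dslope, hhalf]
  split_ifs with hn
  · rw [← Real.rpow_intCast, Real.logb_rpow two_pos (by norm_num), hn]
    push_cast
    ring
  · rw [(mem_dyadicShell_iff.mp hx).2, ← Real.rpow_intCast, Real.logb_rpow two_pos (by norm_num)]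
    push_cast
    ring

/-- (Proposition 3) For every `k ≥ 0`, the global Lyapunov exponent of the infinitely
piecewise linear map `φ_k` equals 2: `∫₀¹ ρᵏ(x) log₂(D_k(x)) dx = 2`. -/
theorem stmt_3 (k : ℕ) :
    ∫ x in Set.Icc (0 : ℝ) 1, rho k x * Real.logb 2 (Dslope k x) = 2 := by
  rw [← setIntegral_congr_set Ioo_ae_eq_Icc]
  refine integral_Ioo_eq_of_eqOn_dyadicShell (fun n x hx => ?_) (hasSum_lyapunov_series k)
  rw [rho_eq_of_mem_dyadicShell hx, logb_Dslope_of_mem_dyadicShell hx]
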